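/- For every integer r ≥ 1, let g_r = p^A(2|…|2|1 / 2r+1) be the Frobenius type-A seaweed whose top composition consists of r parts equal to 2 followed by a 1, and whose bottom composition is the single part 2r+1. Then the multiset { w(P_{i,2r+1}(g_r)) : 1 ≤ i < 2r+1 } equals the multiset in which 2 occurs with multiplicity ⌈r/2⌉, 1 occurs with multiplicity r, and 0 occurs with multiplicity ⌈(r−1)/2⌉. -/

import Mathlib

namespace Seaweed

/-- Positions `i` and `j` (1-indexed) are joined by an arc of the composition `c`:
they lie in the same block of `c` and are placed symmetrically within it. -/
def blockPair (c : List ℕ) (i j : ℕ) : Prop :=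
  ∃ k, k < c.length ∧ (c.take k).sum < i ∧ (c.take k).sum < j ∧
    i + j = 2 * (c.take k).sum + c.getD k 0 + 1 ∧ i ≠ j

lemma blockPair_symm {c : List ℕ} {i j : ℕ} (h : blockPair c i j) : blockPair c j i := by
  obtain ⟨k, hk, hi, hj, hsum, hne⟩ := h
  exact ⟨k, hk, hj, hi, by omega, hne.symm⟩

/-- The meander `M(a|b)` of the pair of compositions `(a, b)`, as a simple graph on `ℕ`
(positions `1, …, a.sum` carry the meander; all other naturals are isolated).
Top edges come from `a`, bottom edges from `b`. -/
def meander (a b : List ℕ) : SimpleGraph ℕ where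
  Adj i j := blockPair a i j ∨ blockPair b i j
  symm := ⟨fun _ _ h => h.imp blockPair_symm blockPair_symm⟩
  loopless := ⟨by
    rintro i (⟨k, _, _, _, _, hne⟩ | ⟨k, _, _, _, _, hne⟩) <;> exact hne rfl⟩

/-- The directed-edge relation of the oriented meander: top edges are oriented
right-to-left, bottom edges left-to-right. -/
def dirEdge (a b : List ℕ) (x y : ℕ) : Prop :=
  (blockPair a x y ∧ y < x) ∨ (blockPair b x y ∧ x < y)

open scoped Classical in
/-- The weight of a walk in the oriented meander: each step taken in agreement with
the orientation counts `+1`, each step against it counts `-1`. -/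
noncomputable def walkWeight (a b : List ℕ) {i j : ℕ} (w : (meander a b).Walk i j) : ℤ :=
  (w.darts.map fun d => if dirEdge a b d.toProd.1 d.toProd.2 then (1 : ℤ) else -1).sum

open scoped Classical in
/-- `w(P_{i,j}(a|b))`: the weight of the (unique, when the meander consists of a single
path) path from `v_i` to `v_j` in the oriented meander. -/
noncomputable def pathWeight (a b : List ℕ) (i j : ℕ) : ℤ :=
  if h : ∃ p : (meander a b).Walk i j, p.IsPath then walkWeight a b h.choose else 0

/-- The meander of `(a, b)` consists of a single path: it has no cycles (in particular no
doubled top/bottom edge, which would be a 2-cycle) and all positions `1, …, n` are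
connected.  This is exactly the condition for `p^A(a|b)` to be Frobenius. -/
def IsSinglePath (a b : List ℕ) : Prop :=
  (meander a b).IsAcyclic ∧
  (∀ i j, i ∈ Finset.Icc 1 a.sum → j ∈ Finset.Icc 1 a.sum → (meander a b).Reachable i j) ∧
  ∀ i j, ¬(blockPair a i j ∧ blockPair b i j)

/-- `i` and `j` lie in the same block of the composition `c`. -/
def sameBlock (c : List ℕ) (i j : ℕ) : Prop :=
  ∃ k, k < c.length ∧ (c.take k).sum < i ∧ i ≤ (c.take k).sum + c.getD k 0 ∧
    (c.take k).sum < j ∧ j ≤ (c.take k).sum + c.getD k 0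

/-- The matrix position `(i, j)` belongs to the seaweed `p^A(a|b)`. -/
def seaweedPos (a b : List ℕ) (i j : ℕ) : Prop :=
  (j ≤ i ∧ sameBlock a i j) ∨ (i ≤ j ∧ sameBlock b i j)

open scoped Classical in
/-- The block of the spectrum matrix of `p^A(a|b)` on rows `R` and columns `C`:
the multiset of weights `w(P_{i,j})` over positions `(i,j)` of the seaweed with
`i ∈ R`, `j ∈ C`. -/
noncomputable def spectrumBlock (a b : List ℕ) (R C : Finset ℕ) : Multiset ℤ :=
  ((R ×ˢ C).filter fun p => seaweedPos a b p.1 p.2).val.map fun p => pathWeight a b p.1 p.2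

/-- The multiset of all values of the extended spectrum matrix of `p^A(a|b)`:
the weights `w(P_{i,j})` over all pairs `1 ≤ i, j ≤ n`. -/
noncomputable def extendedValues (a b : List ℕ) : Multiset ℤ :=
  (Finset.Icc 1 a.sum ×ˢ Finset.Icc 1 a.sum).val.map fun p => pathWeight a b p.1 p.2

/-- The spectrum of a Frobenius type-A seaweed `p^A(a|b)`: the multiset of entries of
its spectrum matrix, with one copy of `0` removed. -/
noncomputable def spectrum (a b : List ℕ) : Multiset ℤ :=
  spectrumBlock a b (Finset.Icc 1 a.sum) (Finset.Icc 1 a.sum) - {0}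

/-- The extended spectrum: all entries of the extended spectrum matrix, with one copy
of `0` removed. -/
noncomputable def extendedSpectrum (a b : List ℕ) : Multiset ℤ :=
  extendedValues a b - {0}

/-- Listing the distinct values of the multiset `S` in increasing order, the
corresponding sequence of multiplicities is log-concave. -/
def HasLogConcaveSpectrum (S : Multiset ℤ) : Prop :=
  ∀ i : ℕ, 0 < i → i + 1 < (S.toFinset.sort (· ≤ ·)).length →
    S.count ((S.toFinset.sort (· ≤ ·)).getD (i - 1) 0) *
      S.count ((S.toFinset.sort (· ≤ ·)).getD (i + 1) 0) ≤
      S.count ((S.toFinset.sort (· ≤ ·)).getD i 0) ^ 2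

/-!
If a function `h` drops by one along every oriented edge of a meander, the weight of any walk
from `i` to `j` is `h i - h j`. For the meander of `(2|…|2|1 / 2r+1)` and `c = ⌈r/2⌉`, the
function `h i = [i ≤ 2c] + [i even]` is such a potential: a top edge runs from `2k+2` to `2k+1`
inside one block, and a bottom edge runs from `i ≤ r` to `2r+2-i ≥ r+2`, across the threshold
`2c`. As `h (2r+1) = 0` and the meander is connected, `w(P_{i,2r+1}) = h i`; on the odd
positions `h` takes the value `1` on `c` of them and `0` on the other `⌊r/2⌋`, and on the even
positions one more.
-/

lemma blockPair_append_one {c : List ℕ} {i j : ℕ} :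
    blockPair (c ++ [1]) i j ↔ blockPair c i j := by
  constructor
  · rintro ⟨k, hk, hi, hj, hsum, hne⟩
    rw [List.length_append, List.length_singleton] at hk
    rcases Nat.lt_succ_iff_lt_or_eq.1 hk with hk | rfl
    · rw [List.take_append_of_le_length hk.le] at hi hj hsum
      rw [List.getD_append _ _ _ _ hk] at hsum
      exact ⟨k, hk, hi, hj, hsum, hne⟩
    · simp only [List.take_left', List.getD_append_right, le_refl, Nat.sub_self,
        List.getD_cons_zero] at hi hj hsum
      omega
  · rintro ⟨k, hk, hi, hj, hsum, hne⟩
    refine ⟨k, by rw [List.length_append, List.length_singleton]; omega, ?_⟩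
    rw [List.take_append_of_le_length hk.le, List.getD_append _ _ _ _ hk]
    exact ⟨hi, hj, hsum, hne⟩

lemma blockPair_replicate_two {r i j : ℕ} :
    blockPair (List.replicate r 2) i j ↔
      ∃ k < r, (i = 2 * k + 1 ∧ j = 2 * k + 2) ∨ (i = 2 * k + 2 ∧ j = 2 * k + 1) := by
  have hsum : ∀ k ≤ r, ((List.replicate r 2).take k).sum = 2 * k := fun k hk => by
    simp [List.take_replicate, Nat.min_eq_left hk, mul_comm]
  have hget : ∀ k < r, (List.replicate r 2).getD k 0 = 2 := fun k hk => by
    simp [hk]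
  constructor
  · rintro ⟨k, hk, hi, hj, hij, hne⟩
    rw [List.length_replicate] at hk
    rw [hsum k hk.le] at hi hj hij
    rw [hget k hk] at hij
    exact ⟨k, hk, by omega⟩
  · rintro ⟨k, hk, hij⟩
    refine ⟨k, by simpa using hk, ?_⟩
    rw [hsum k hk.le, hget k hk]
    omega

lemma blockPair_singleton {n i j : ℕ} :
    blockPair [n] i j ↔ 0 < i ∧ 0 < j ∧ i + j = n + 1 ∧ i ≠ j := by
  constructor
  · rintro ⟨k, hk, hi, hj, hij, hne⟩
    obtain rfl : k = 0 := by simpa using hk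
    simp only [List.take_zero, List.sum_nil, List.getD_cons_zero] at hi hj hij
    exact ⟨hi, hj, by omega, hne⟩
  · rintro ⟨hi, hj, hij, hne⟩
    refine ⟨0, by simp, by simpa using hi, by simpa using hj, ?_, hne⟩
    simp only [List.take_zero, List.sum_nil, List.getD_cons_zero]
    omega

lemma Icc_one_two_mul_val (r : ℕ) : (Finset.Icc 1 (2 * r)).val =
    (Multiset.range r).map (fun k => 2 * k + 1) + (Multiset.range r).map (fun k => 2 * k + 2) := by
  induction r with
  | zero => rfl
  | succ n ih =>
    rw [show 2 * (n + 1) = 2 * n + 1 + 1 by ring,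
      ← Finset.insert_Icc_right_eq_Icc_add_one (by omega), Finset.insert_val_of_notMem (by simp),
      ← Finset.insert_Icc_right_eq_Icc_add_one (by omega), Finset.insert_val_of_notMem (by simp),
      ih, Multiset.range_succ, Multiset.map_cons, Multiset.map_cons, Multiset.cons_add,
      Multiset.add_cons, Multiset.cons_swap]
    rfl

lemma map_range_eq_replicate_add {α : Type*} {f : ℕ → α} {x y : α} {n c d : ℕ}
    (hn : c + d = n) (hlow : ∀ k < c, f k = x) (hhigh : ∀ k, c ≤ k → f k = y) :
    (Multiset.range n).map f = Multiset.replicate c x + Multiset.replicate d y := by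
  rw [← hn, Multiset.range_add, Multiset.map_add, Multiset.map_map,
    Multiset.map_congr rfl fun k hk => hlow k (Multiset.mem_range.1 hk),
    Multiset.map_congr (f := f ∘ (c + ·)) rfl fun k _ => hhigh (c + k) (Nat.le_add_right c k),
    Multiset.map_const', Multiset.map_const', Multiset.card_range, Multiset.card_range]

section Potential

variable {a b : List ℕ}

lemma meander_adj {i j : ℕ} : (meander a b).Adj i j ↔ blockPair a i j ∨ blockPair b i j :=
  Iff.rfl

lemma dirEdge_or_dirEdge_of_adj {x y : ℕ} (hxy : (meander a b).Adj x y) :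
    dirEdge a b x y ∨ dirEdge a b y x := by
  rcases lt_or_gt_of_ne hxy.ne with hlt | hlt <;> rcases hxy with hA | hB
  exacts [.inr (.inl ⟨blockPair_symm hA, hlt⟩), .inl (.inr ⟨hB, hlt⟩),
    .inl (.inl ⟨hA, hlt⟩), .inr (.inr ⟨blockPair_symm hB, hlt⟩)]

open scoped Classical in
lemma walkWeight_cons {u v w : ℕ} (huv : (meander a b).Adj u v) (p : (meander a b).Walk v w) :
    walkWeight a b (.cons huv p) = (if dirEdge a b u v then 1 else -1) + walkWeight a b p := by
  simp [walkWeight]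

variable (h : ℕ → ℤ)

lemma walkWeight_eq_sub_of_dirEdge (hh : ∀ x y, dirEdge a b x y → h x = h y + 1)
    {i j : ℕ} (p : (meander a b).Walk i j) : walkWeight a b p = h i - h j := by
  classical
  induction p with
  | nil => simp [walkWeight]
  | @cons u v w huv p ih =>
    rw [walkWeight_cons, ih]
    split_ifs with hd
    · linarith [hh u v hd]
    · have hvu := (dirEdge_or_dirEdge_of_adj huv).resolve_left hd
      linarith [hh v u hvu]

lemma pathWeight_eq_sub_of_dirEdge (hh : ∀ x y, dirEdge a b x y → h x = h y + 1)
    {i j : ℕ} (hij : (meander a b).Reachable i j) : pathWeight a b i j = h i - h j := by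
  classical
  have hpath : ∃ p : (meander a b).Walk i j, p.IsPath :=
    let ⟨p⟩ := hij; ⟨p.bypass, p.bypass_isPath⟩
  rw [pathWeight, dif_pos hpath, walkWeight_eq_sub_of_dirEdge h hh]

end Potential

section Meander

variable {r : ℕ}

local notation "M" => meander (List.replicate r 2 ++ [1]) [2 * r + 1]

lemma reachable_reflect {i : ℕ} (hi : 0 < i) (hir : i ≤ 2 * r + 1) :
    (M).Reachable i (2 * r + 2 - i) := by
  by_cases hmid : i = 2 * r + 2 - i
  · rw [← hmid]
  · exact (meander_adj.2 <| .inr <|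
      blockPair_singleton.2 ⟨hi, by omega, by omega, hmid⟩).reachable

lemma reachable_succ_of_odd {i : ℕ} (hodd : i % 2 = 1) (hir : i < 2 * r) :
    (M).Reachable i (i + 1) :=
  (meander_adj.2 <| .inl <| blockPair_append_one.2 <|
    blockPair_replicate_two.2 ⟨i / 2, by omega, .inl ⟨by omega, by omega⟩⟩).reachable

lemma reachable_last {i : ℕ} (hi : 0 < i) (hir : i ≤ 2 * r + 1) :
    (M).Reachable i (2 * r + 1) := by
  induction i using Nat.strong_induction_on with
  | _ i ih =>
  by_cases hright : r + 1 < i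
  · exact (reachable_reflect hi hir).trans (ih _ (by omega) (by omega) (by omega))
  rcases Nat.lt_or_ge i 2 with hone | htwo
  · obtain rfl : i = 1 := by omega
    simpa using reachable_reflect (r := r) hi hir
  rcases Nat.mod_two_eq_zero_or_one i with heven | hodd
  · have hprev := reachable_succ_of_odd (r := r) (i := i - 1) (by omega) (by omega)
    rw [Nat.sub_add_cancel (by omega)] at hprev
    exact hprev.symm.trans (ih _ (by omega) (by omega) (by omega))
  -- an odd vertex of the left half reaches `i - 1` through the right half
  · have h₁ := reachable_reflect hi hir
    have h₂ := reachable_succ_of_odd (r := r) (i := 2 * r + 2 - i) (by omega) (by omega)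
    have h₃ := reachable_reflect (r := r) (i := 2 * r + 2 - i + 1) (by omega) (by omega)
    rw [show 2 * r + 2 - (2 * r + 2 - i + 1) = i - 1 by omega] at h₃
    exact h₁.trans <| h₂.trans <| h₃.trans <| ih _ (by omega) (by omega) (by omega)

def height (r i : ℕ) : ℤ :=
  (if i ≤ 2 * ((r + 1) / 2) then 1 else 0) + (if i % 2 = 0 then 1 else 0)

lemma height_eq_add_one_of_dirEdge {x y : ℕ}
    (hxy : dirEdge (List.replicate r 2 ++ [1]) [2 * r + 1] x y) : height r x = height r y + 1 := by
  rcases hxy with ⟨htop, hlt⟩ | ⟨hbot, hlt⟩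
  · obtain ⟨k, hk, hxy⟩ := blockPair_replicate_two.1 (blockPair_append_one.1 htop)
    obtain ⟨rfl, rfl⟩ : x = 2 * k + 2 ∧ y = 2 * k + 1 := by omega
    simp only [height]
    split_ifs <;> omega
  · obtain ⟨hx, hy, hsum, hne⟩ := blockPair_singleton.1 hbot
    simp only [height]
    split_ifs <;> omega

lemma pathWeight_last {i : ℕ} (hi : 0 < i) (hir : i ≤ 2 * r + 1) :
    pathWeight (List.replicate r 2 ++ [1]) [2 * r + 1] i (2 * r + 1) = height r i := by
  rw [pathWeight_eq_sub_of_dirEdge (height r) (fun _ _ => height_eq_add_one_of_dirEdge)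
    (reachable_last hi hir)]
  simp only [height]
  split_ifs <;> omega

end Meander

theorem statement18_general (r : ℕ) :
    ((Finset.Icc 1 (2 * r)).val.map fun i =>
        pathWeight (List.replicate r 2 ++ [1]) [2 * r + 1] i (2 * r + 1))
      = Multiset.replicate ((r + 1) / 2) (2 : ℤ) + Multiset.replicate r (1 : ℤ) +
          Multiset.replicate (r / 2) (0 : ℤ) := by
  have hr : (r + 1) / 2 + r / 2 = r := by omega
  have hweight : ∀ i ∈ Finset.Icc 1 (2 * r),
      pathWeight (List.replicate r 2 ++ [1]) [2 * r + 1] i (2 * r + 1) = height r i :=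
    fun i hi => have := Finset.mem_Icc.1 hi; pathWeight_last (by omega) (by omega)
  obtain ⟨hodd, heven⟩ :
      (Multiset.range r).map (height r ∘ fun k => 2 * k + 1) =
        Multiset.replicate ((r + 1) / 2) 1 + Multiset.replicate (r / 2) 0 ∧
      (Multiset.range r).map (height r ∘ fun k => 2 * k + 2) =
        Multiset.replicate ((r + 1) / 2) 2 + Multiset.replicate (r / 2) 1 := by
    constructor <;> refine map_range_eq_replicate_add hr (fun k hk => ?_) (fun k hk => ?_) <;>
      simp only [Function.comp_apply, height] <;> split_ifs <;> omega
  have hones : Multiset.replicate r (1 : ℤ) =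
      Multiset.replicate ((r + 1) / 2) 1 + Multiset.replicate (r / 2) 1 := by
    rw [← Multiset.replicate_add, hr]
  rw [Multiset.map_congr rfl hweight, Icc_one_two_mul_val, Multiset.map_add,
    Multiset.map_map, Multiset.map_map, hodd, heven, hones]
  abel

/-- For `r ≥ 1` and `g_r = p^A(2|…|2|1 / 2r+1)` (with `r` parts equal to `2`), the
multiset `{ w(P_{i,2r+1}(g_r)) : 1 ≤ i < 2r+1 }` equals
`{2^{⌈r/2⌉}, 1^r, 0^{⌈(r-1)/2⌉}}`. -/
theorem statement18 (r : ℕ) (hr : 1 ≤ r) :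
    ((Finset.Icc 1 (2 * r)).val.map fun i =>
        pathWeight (List.replicate r 2 ++ [1]) [2 * r + 1] i (2 * r + 1))
      = Multiset.replicate ((r + 1) / 2) (2 : ℤ) + Multiset.replicate r (1 : ℤ) +
          Multiset.replicate (r / 2) (0 : ℤ) :=
  statement18_general r

end Seaweed
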